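/- arXiv:2210.02976 — 4 statements merged into one kernel-verified Lean document; each statement's English description precedes it below -/
import Mathlib

section
/- Let X, Y be normed vector spaces and L¹, L² : X → Y operators. Assume (1) there exists a unique u_Δ ∈ X with L²(u_Δ) = 0; (2) there exists α₁ > 0 with ‖L¹(v) − L¹(w)‖_Y ≥ α₁‖v − w‖_X for all v, w ∈ X; (3) there exists α₂ ≥ 0 and Δ > 0 with ‖(L¹(v) − L²(v)) − (L¹(w) − L²(w))‖_Y ≤ α₂ Δ ‖v − w‖_X for all v, w. If the sequence u⁽ᵖ⁾ satisfies L¹(u⁽ᵖ⁾) = L¹(u⁽ᵖ⁻¹⁾) − L²(u⁽ᵖ⁻¹⁾) for p = 1,…,P, then ‖u⁽ᴾ⁾ − u_Δ‖_X ≤ (Δ α₂/α₁)ᴾ ‖u⁽⁰⁾ − u_Δ‖_X. -/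
/-- DeC accuracy theorem. -/
theorem dec_accuracy
    {X Y : Type*} [NormedAddCommGroup X] [NormedSpace ℝ X]
    [NormedAddCommGroup Y] [NormedSpace ℝ Y]
    (L1 L2 : X → Y) (uΔ : X) (Δ α1 α2 : ℝ)
    (hΔ : 0 < Δ) (hα1 : 0 < α1) (hα2 : 0 ≤ α2)
    (hzero : L2 uΔ = 0) (huniq : ∀ v : X, L2 v = 0 → v = uΔ)
    (hcoerc : ∀ v w : X, α1 * ‖v - w‖ ≤ ‖L1 v - L1 w‖)
    (hlip : ∀ v w : X, ‖(L1 v - L2 v) - (L1 w - L2 w)‖ ≤ α2 * Δ * ‖v - w‖)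
    (P : ℕ) (u : ℕ → X)
    (hiter : ∀ p : ℕ, 1 ≤ p → p ≤ P → L1 (u p) = L1 (u (p - 1)) - L2 (u (p - 1))) :
    ‖u P - uΔ‖ ≤ (Δ * α2 / α1) ^ P * ‖u 0 - uΔ‖ := by
  induction P with
  | zero => simp
  | succ n ih =>
    have hstep : α1 * ‖u (n + 1) - uΔ‖ ≤ α2 * Δ * ‖u n - uΔ‖ := by
      calc α1 * ‖u (n + 1) - uΔ‖ ≤ ‖L1 (u (n + 1)) - L1 uΔ‖ := hcoerc _ _
        _ = ‖(L1 (u n) - L2 (u n)) - (L1 uΔ - L2 uΔ)‖ := by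
            rw [hiter (n + 1) (by omega) le_rfl]
            simp [hzero]
        _ ≤ α2 * Δ * ‖u n - uΔ‖ := hlip _ _
    have hn : ‖u n - uΔ‖ ≤ (Δ * α2 / α1) ^ n * ‖u 0 - uΔ‖ :=
      ih (fun p h1 h2 => hiter p h1 (by omega))
    have h1 : ‖u (n + 1) - uΔ‖ ≤ (Δ * α2 / α1) * ‖u n - uΔ‖ := by
      rw [div_mul_eq_mul_div, le_div_iff₀ hα1]
      nlinarith
    calc ‖u (n + 1) - uΔ‖ ≤ (Δ * α2 / α1) * ‖u n - uΔ‖ := h1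
      _ ≤ (Δ * α2 / α1) * ((Δ * α2 / α1) ^ n * ‖u 0 - uΔ‖) := by
          apply mul_le_mul_of_nonneg_left hn (by positivity)
      _ = (Δ * α2 / α1) ^ (n + 1) * ‖u 0 - uΔ‖ := by ring
end

section
/- Under the hypotheses of the DeC accuracy theorem, if additionally Δ α₂/α₁ < 1, then the DeC iterates u⁽ᵖ⁾ converge to the unique solution u_Δ of L²(u_Δ) = 0 as p → ∞, for any choice of starting vector u⁽⁰⁾ ∈ X. -/
/-- Convergence of the DeC iterates when Δ α₂/α₁ < 1. -/
theorem dec_convergence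
    {X Y : Type*} [NormedAddCommGroup X] [NormedSpace ℝ X]
    [NormedAddCommGroup Y] [NormedSpace ℝ Y]
    (L1 L2 : X → Y) (uΔ : X) (Δ α1 α2 : ℝ)
    (hΔ : 0 < Δ) (hα1 : 0 < α1) (hα2 : 0 ≤ α2)
    (hzero : L2 uΔ = 0) (huniq : ∀ v : X, L2 v = 0 → v = uΔ)
    (hcoerc : ∀ v w : X, α1 * ‖v - w‖ ≤ ‖L1 v - L1 w‖)
    (hlip : ∀ v w : X, ‖(L1 v - L2 v) - (L1 w - L2 w)‖ ≤ α2 * Δ * ‖v - w‖)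
    (hsmall : Δ * α2 / α1 < 1)
    (u : ℕ → X)
    (hiter : ∀ p : ℕ, 1 ≤ p → L1 (u p) = L1 (u (p - 1)) - L2 (u (p - 1))) :
    Filter.Tendsto u Filter.atTop (nhds uΔ) := by
  set r : ℝ := Δ * α2 / α1 with hr
  have hr0 : 0 ≤ r := by positivity
  have hstep : ∀ p : ℕ, ‖u (p + 1) - uΔ‖ ≤ r * ‖u p - uΔ‖ := by
    intro p
    have h1 : α1 * ‖u (p + 1) - uΔ‖ ≤ ‖L1 (u (p + 1)) - L1 uΔ‖ := hcoerc _ _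
    have h2 : L1 (u (p + 1)) = L1 (u p) - L2 (u p) := by
      have := hiter (p + 1) (Nat.le_add_left 1 p)
      simpa using this
    have h3 : L1 (u (p + 1)) - L1 uΔ = (L1 (u p) - L2 (u p)) - (L1 uΔ - L2 uΔ) := by
      rw [h2, hzero]; abel
    have h4 : ‖L1 (u (p + 1)) - L1 uΔ‖ ≤ α2 * Δ * ‖u p - uΔ‖ := by
      rw [h3]; exact hlip _ _
    have h5 : α1 * ‖u (p + 1) - uΔ‖ ≤ α2 * Δ * ‖u p - uΔ‖ := h1.trans h4
    rw [hr]
    rw [div_mul_eq_mul_div, le_div_iff₀ hα1]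
    nlinarith [norm_nonneg (u (p+1) - uΔ), norm_nonneg (u p - uΔ)]
  have hbound : ∀ p : ℕ, ‖u p - uΔ‖ ≤ r ^ p * ‖u 0 - uΔ‖ := by
    intro p
    induction p with
    | zero => simp
    | succ n ih =>
      calc ‖u (n + 1) - uΔ‖ ≤ r * ‖u n - uΔ‖ := hstep n
        _ ≤ r * (r ^ n * ‖u 0 - uΔ‖) := by
              exact mul_le_mul_of_nonneg_left ih hr0
        _ = r ^ (n + 1) * ‖u 0 - uΔ‖ := by ring
  have hpow : Filter.Tendsto (fun p : ℕ => r ^ p * ‖u 0 - uΔ‖) Filter.atTop (nhds 0) := by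
    have := tendsto_pow_atTop_nhds_zero_of_lt_one hr0 hsmall
    simpa using this.mul_const ‖u 0 - uΔ‖
  have hnorm : Filter.Tendsto (fun p => ‖u p - uΔ‖) Filter.atTop (nhds 0) :=
    squeeze_zero (fun p => norm_nonneg _) hbound hpow
  have := tendsto_iff_norm_sub_tendsto_zero.mpr hnorm
  simpa using this
end

section
/- Let u⁽⁰⁾ ∈ X and define the DeC iterates by L¹(u⁽ᵖ⁾) = L¹(u⁽ᵖ⁻¹⁾) − L²(u⁽ᵖ⁻¹⁾). Suppose the exact solution u^{ex} of the underlying problem satisfies ‖u_Δ − u^{ex}‖ ≤ C Δ^R (the high-order operator is R-th order accurate) and ‖u⁽⁰⁾ − u_Δ‖ ≤ C' Δ. Then ‖u⁽ᴾ⁾ − u^{ex}‖ ≤ (α₂/α₁)^P C' Δ^{P+1} + C Δ^R; in particular, for P = R − 1 iterations (and hence for P = R as well, with appropriate constants) the iterate u⁽ᴾ⁾ is an R-th order accurate approximation of u^{ex}: ‖u⁽ᴾ⁾ − u^{ex}‖ ≤ C'' Δ^R for a constant C'' independent of Δ (for Δ ≤ 1). -/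
/-- Combining DeC accuracy with the accuracy of the high-order operator gives
accuracy with respect to the exact solution. -/
theorem dec_accuracy_wrt_exact
    {X Y : Type*} [NormedAddCommGroup X] [NormedSpace ℝ X]
    [NormedAddCommGroup Y] [NormedSpace ℝ Y]
    (L1 L2 : X → Y) (uΔ uex : X) (Δ α1 α2 : ℝ)
    (hΔ : 0 < Δ) (hα1 : 0 < α1) (hα2 : 0 ≤ α2)
    (hzero : L2 uΔ = 0) (huniq : ∀ v : X, L2 v = 0 → v = uΔ)
    (hcoerc : ∀ v w : X, α1 * ‖v - w‖ ≤ ‖L1 v - L1 w‖)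
    (hlip : ∀ v w : X, ‖(L1 v - L2 v) - (L1 w - L2 w)‖ ≤ α2 * Δ * ‖v - w‖)
    (P R : ℕ) (C C' : ℝ) (hC : 0 < C) (hC' : 0 < C')
    (hacc : ‖uΔ - uex‖ ≤ C * Δ ^ R)
    (u : ℕ → X)
    (hinit : ‖u 0 - uΔ‖ ≤ C' * Δ)
    (hiter : ∀ p : ℕ, 1 ≤ p → p ≤ P → L1 (u p) = L1 (u (p - 1)) - L2 (u (p - 1))) :
    ‖u P - uex‖ ≤ (α2 / α1) ^ P * C' * Δ ^ (P + 1) + C * Δ ^ R ∧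
    (P + 1 = R → Δ ≤ 1 → ‖u P - uex‖ ≤ ((α2 / α1) ^ P * C' + C) * Δ ^ R) := by
  have key : ∀ p, p ≤ P → ‖u p - uΔ‖ ≤ (α2 * Δ / α1) ^ p * (C' * Δ) := by
    intro p
    induction p with
    | zero => intro _; simpa using hinit
    | succ p ih =>
      intro hpP
      have hp : p ≤ P := Nat.le_of_succ_le hpP
      have hiter' := hiter (p + 1) (by omega) hpP
      simp only [Nat.add_sub_cancel] at hiter'
      have h1 : α1 * ‖u (p + 1) - uΔ‖ ≤ α2 * Δ * ‖u p - uΔ‖ := by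
        calc α1 * ‖u (p + 1) - uΔ‖ ≤ ‖L1 (u (p + 1)) - L1 uΔ‖ := hcoerc _ _
          _ = ‖(L1 (u p) - L2 (u p)) - (L1 uΔ - L2 uΔ)‖ := by
              rw [hiter', hzero, sub_zero]
          _ ≤ α2 * Δ * ‖u p - uΔ‖ := hlip _ _
      have h2 : ‖u (p + 1) - uΔ‖ ≤ (α2 * Δ / α1) * ‖u p - uΔ‖ := by
        rw [div_mul_eq_mul_div, le_div_iff₀ hα1, mul_comm _ α1]
        exact h1
      calc ‖u (p + 1) - uΔ‖ ≤ (α2 * Δ / α1) * ‖u p - uΔ‖ := h2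
        _ ≤ (α2 * Δ / α1) * ((α2 * Δ / α1) ^ p * (C' * Δ)) := by
            apply mul_le_mul_of_nonneg_left (ih hp)
            positivity
        _ = (α2 * Δ / α1) ^ (p + 1) * (C' * Δ) := by ring
  have hPΔ : ‖u P - uΔ‖ ≤ (α2 / α1) ^ P * C' * Δ ^ (P + 1) := by
    have := key P le_rfl
    have heq : (α2 * Δ / α1) ^ P * (C' * Δ) = (α2 / α1) ^ P * C' * Δ ^ (P + 1) := by
      rw [div_pow, div_pow]; ring
    linarith [this, heq ▸ this]
  have main : ‖u P - uex‖ ≤ (α2 / α1) ^ P * C' * Δ ^ (P + 1) + C * Δ ^ R := by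
    calc ‖u P - uex‖ = ‖(u P - uΔ) + (uΔ - uex)‖ := by rw [sub_add_sub_cancel]
      _ ≤ ‖u P - uΔ‖ + ‖uΔ - uex‖ := norm_add_le _ _
      _ ≤ (α2 / α1) ^ P * C' * Δ ^ (P + 1) + C * Δ ^ R := add_le_add hPΔ hacc
  refine ⟨main, fun hPR _ => ?_⟩
  rw [← hPR] at main ⊢
  linarith [main]
end

section
/- The residual-based spectral DeC update e^{m,(p)} = e^{m−1,(p)} + Δt γ^m [G(t^{m−1}, u^{m−1,(p−1)} + e^{m−1,(p)}) − G(t^{m−1}, u^{m−1,(p−1)})] + r^{m,(p−1)} − r^{m−1,(p−1)}, with e^{0,(p)} = 0, r^{m,(p−1)} = u_n + Δt Σ_{r=1}^{m} Σ_{ℓ=0}^{M} δ^r_ℓ G(t^ℓ, u^{ℓ,(p−1)}) − u^{m,(p−1)}, and new iterate u^{m,(p)} := u^{m,(p−1)} + e^{m,(p)}, is equivalent to the sDeC update u^{m,(p)} = u^{m−1,(p)} + Δt γ^m [G(t^{m−1}, u^{m−1,(p)}) − G(t^{m−1}, u^{m−1,(p−1)})] + Δt Σ_{ℓ=0}^{M}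 δ^m_ℓ G(t^ℓ, u^{ℓ,(p−1)}): both recursions produce the same values u^{m,(p)}. -/
/-- The residual-based spectral DeC update is equivalent to the sDeC update:
both recursions produce the same values `u^{m,(p)}`. -/
theorem spectral_dec_equiv_sdec
    (Q M : ℕ) (G : ℝ → (Fin Q → ℝ) → (Fin Q → ℝ))
    (t : ℕ → ℝ) (γ : ℕ → ℝ) (δ : ℕ → ℕ → ℝ) (Δt : ℝ)
    (un : Fin Q → ℝ) (uprev : ℕ → Fin Q → ℝ) (hprev0 : uprev 0 = un)
    (r : ℕ → Fin Q → ℝ)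
    (hr : ∀ m : ℕ, r m = un
      + Δt • ∑ ri ∈ Finset.Icc 1 m, ∑ ℓ ∈ Finset.range (M + 1),
          δ ri ℓ • G (t ℓ) (uprev ℓ)
      - uprev m)
    (e : ℕ → Fin Q → ℝ) (he0 : e 0 = 0)
    (he : ∀ m : ℕ, 1 ≤ m → m ≤ M →
      e m = e (m - 1)
        + (Δt * γ m) • (G (t (m - 1)) (uprev (m - 1) + e (m - 1))
            - G (t (m - 1)) (uprev (m - 1)))
        + r m - r (m - 1))
    (u1 : ℕ → Fin Q → ℝ) (hu1 : ∀ m : ℕ, u1 m = uprev m + e m)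
    (u2 : ℕ → Fin Q → ℝ) (hu20 : u2 0 = un)
    (hu2 : ∀ m : ℕ, 1 ≤ m → m ≤ M →
      u2 m = u2 (m - 1)
        + (Δt * γ m) • (G (t (m - 1)) (u2 (m - 1)) - G (t (m - 1)) (uprev (m - 1)))
        + Δt • ∑ ℓ ∈ Finset.range (M + 1), δ m ℓ • G (t ℓ) (uprev ℓ)) :
    ∀ m : ℕ, m ≤ M → u1 m = u2 m := by
  intro m
  induction m with
  | zero => intro _; rw [hu1, hprev0, he0, hu20]; simp
  | succ m ih =>
    intro hmM
    have hm1 : m ≤ M := Nat.le_of_succ_le hmM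
    have ihm := ih hm1
    have hsub : (m + 1) - 1 = m := rfl
    have hrdiff : r (m + 1) - r m
        = Δt • ∑ ℓ ∈ Finset.range (M + 1), δ (m + 1) ℓ • G (t ℓ) (uprev ℓ)
          + uprev m - uprev (m + 1) := by
      rw [hr, hr, Finset.sum_Icc_succ_top (Nat.succ_le_succ (Nat.zero_le m)), smul_add]
      abel
    have key := he (m + 1) (Nat.succ_le_succ (Nat.zero_le m)) hmM
    rw [hsub] at key
    have hu1m : uprev m + e m = u2 m := by rw [← hu1, ihm]
    rw [hu1, key, hu2 (m + 1) (Nat.succ_le_succ (Nat.zero_le m)) hmM, hsub,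
      ← ihm, hu1, hu1m]
    linear_combination hrdiff + hu1m
end
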